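/- For any two distinct vertices v and w of a strongly connected digraph G, v↔2v w if and only if v↔vr w and v↔2e w. -/

import Mathlib

variable {V : Type*}

/-- Mutual reachability (strong connectivity of a pair) in the digraph `E`. -/
def SConn (E : V → V → Prop) (u v : V) : Prop :=
  Relation.ReflTransGen E u v ∧ Relation.ReflTransGen E v u

/-- The digraph obtained from `E` by deleting vertex `w` (and incident edges). -/
def delV (E : V → V → Prop) (w : V) : V → V → Prop :=
  fun a b => E a b ∧ a ≠ w ∧ b ≠ w

/-- The digraph obtained from `E` by deleting the single edge `(a,b)`. -/
def delE (E : V → V → Prop) (a b : V) : V → V → Prop :=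
  fun x y => E x y ∧ ¬(x = a ∧ y = b)

/-- `u` and `v` are vertex-resilient: they are distinct and remain strongly
connected after deletion of any single other vertex. -/
def VRes (E : V → V → Prop) (u v : V) : Prop :=
  u ≠ v ∧ ∀ w, w ≠ u → w ≠ v → SConn (delV E w) u v

/-- A vertex-resilient block: a maximal set of size ≥ 2 of pairwise
vertex-resilient vertices. -/
def IsVRBlock (E : V → V → Prop) (B : Set V) : Prop :=
  B.Pairwise (VRes E) ∧ (∃ a ∈ B, ∃ b ∈ B, a ≠ b) ∧
    ∀ B' : Set V, B ⊆ B' → B'.Pairwise (VRes E) → B' = B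

/-- `l` is (the vertex list of) a directed path from `u` to `v` in `E`. -/
def IsPathList (E : V → V → Prop) (u v : V) (l : List V) : Prop :=
  l.Chain' E ∧ l.head? = some u ∧ l.getLast? = some v

/-- The internal vertices of a path given as a vertex list. -/
def internalsL (l : List V) : List V := (l.drop 1).dropLast

/-- The edges of a path given as a vertex list. -/
def edgesOfL (l : List V) : List (V × V) := l.zip l.tail

/-- There exist two internally vertex-disjoint (simple, distinct) paths from `u` to `v`. -/
def TwoVPaths (E : V → V → Prop) (u v : V) : Prop :=
  ∃ l₁ l₂ : List V, IsPathList E u v l₁ ∧ IsPathList E u v l₂ ∧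
    l₁.Nodup ∧ l₂.Nodup ∧ l₁ ≠ l₂ ∧ ∀ x ∈ internalsL l₁, x ∉ internalsL l₂

/-- `u` and `v` are 2-vertex-connected. -/
def TwoVConn (E : V → V → Prop) (u v : V) : Prop :=
  u ≠ v ∧ TwoVPaths E u v ∧ TwoVPaths E v u

/-- There exist two edge-disjoint paths from `u` to `v`. -/
def TwoEPaths (E : V → V → Prop) (u v : V) : Prop :=
  ∃ l₁ l₂ : List V, IsPathList E u v l₁ ∧ IsPathList E u v l₂ ∧
    ∀ e ∈ edgesOfL l₁, e ∉ edgesOfL l₂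

/-- `u` and `v` are 2-edge-connected. -/
def TwoEConn (E : V → V → Prop) (u v : V) : Prop :=
  u ≠ v ∧ TwoEPaths E u v ∧ TwoEPaths E v u

/-- A 2-vertex-connected block. -/
def Is2VBlock (E : V → V → Prop) (B : Set V) : Prop :=
  B.Pairwise (TwoVConn E) ∧ (∃ a ∈ B, ∃ b ∈ B, a ≠ b) ∧
    ∀ B' : Set V, B ⊆ B' → B'.Pairwise (TwoVConn E) → B' = B

/-- A 2-edge-connected block. -/
def Is2EBlock (E : V → V → Prop) (B : Set V) : Prop :=
  B.Pairwise (TwoEConn E) ∧ (∃ a ∈ B, ∃ b ∈ B, a ≠ b) ∧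
    ∀ B' : Set V, B ⊆ B' → B'.Pairwise (TwoEConn E) → B' = B

/-- The digraph `E` is strongly connected. -/
def StronglyConn (E : V → V → Prop) : Prop :=
  ∀ u v, Relation.ReflTransGen E u v

/-- `(a,b)` is a strong bridge of the strongly connected digraph `E`. -/
def IsStrongBridge (E : V → V → Prop) (a b : V) : Prop :=
  E a b ∧ ¬ StronglyConn (delE E a b)

/-- `u` dominates `w` in the flow graph with start vertex `s`:
every path from `s` to `w` contains `u`. -/
def DomOf (E : V → V → Prop) (s u w : V) : Prop :=
  ∀ l : List V, IsPathList E s w l → u ∈ l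

/-- `d` is the immediate dominator of `w` in the flow graph with start `s`:
the proper dominator of `w` dominated by all proper dominators of `w`. -/
def IdomOf (E : V → V → Prop) (s d w : V) : Prop :=
  d ≠ w ∧ DomOf E s d w ∧ ∀ u, u ≠ w → DomOf E s u w → DomOf E s u d

/-- The block graph `F` of the digraph `E`: the bipartite undirected graph on the
vertices of `E` together with its vertex-resilient blocks, a vertex `u` being
adjacent to a block node `B` exactly when `u ∈ B`. -/
def blockGraph (E : V → V → Prop) :
    SimpleGraph (V ⊕ {B : Set V // IsVRBlock E B}) where
  Adj a b := ∃ u B, u ∈ B.1 ∧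
    ((a = Sum.inl u ∧ b = Sum.inr B) ∨ (a = Sum.inr B ∧ b = Sum.inl u))
  symm := by
    constructor
    rintro a b ⟨u, B, hm, (⟨rfl, rfl⟩ | ⟨rfl, rfl⟩)⟩
    · exact ⟨u, B, hm, Or.inr ⟨rfl, rfl⟩⟩
    · exact ⟨u, B, hm, Or.inl ⟨rfl, rfl⟩⟩
  loopless := by
    constructor
    rintro a ⟨u, B, hm, (⟨rfl, h⟩ | ⟨rfl, h⟩)⟩ <;> simp at h

/-!
Two internally disjoint `v`–`w` paths share no edge (a common edge could only be `v → w`, forcing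
both paths to be `[v, w]`), and one of them avoids any given third vertex; this is the forward
direction.

For the converse, if `v → w` is an edge, it forms two internally disjoint paths together with a
path that avoids it. Otherwise split every vertex `x` into an edge `(x, false) → (x, true)`, so that
edge-disjoint `(v, true)`–`(w, false)` paths of the split digraph project to internally disjoint
`v`–`w` paths. Fix one such path `P` and reverse its edges to get the residual digraph. If the
residual digraph still reaches `(w, false)` by a path `Q`, cancelling the antiparallel edges of `P`
and `Q` leaves an edge set with net outflow `2` at the source and `-2` at the sink, which splits
into two edge-disjoint paths. If not, the edge on which `P` leaves the residually reachable set lies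
on every path; one of its ends comes from an internal vertex of `P`, whose deletion would then
separate `v` from `w`.
-/

open Relation

section Paths

variable {R R' : V → V → Prop} {l : List V} {u w x : V}

@[simp] theorem edgesOfL_nil : edgesOfL ([] : List V) = [] := rfl

@[simp] theorem edgesOfL_singleton (a : V) : edgesOfL [a] = [] := rfl

@[simp] theorem edgesOfL_cons_cons (a b : V) (l : List V) :
    edgesOfL (a :: b :: l) = (a, b) :: edgesOfL (b :: l) := rfl

theorem map_fst_edgesOfL (l : List V) : (edgesOfL l).map Prod.fst = l.dropLast := by
  induction l with
  | nil => rfl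
  | cons a l ih => cases l with
    | nil => rfl
    | cons b l => simp [ih]

theorem map_snd_edgesOfL (l : List V) : (edgesOfL l).map Prod.snd = l.tail :=
  List.map_snd_zip (by simp)

theorem fst_mem_dropLast_of_mem_edgesOfL {p : V × V} (hp : p ∈ edgesOfL l) : p.1 ∈ l.dropLast :=
  map_fst_edgesOfL l ▸ List.mem_map_of_mem hp

theorem snd_mem_tail_of_mem_edgesOfL {p : V × V} (hp : p ∈ edgesOfL l) : p.2 ∈ l.tail :=
  map_snd_edgesOfL l ▸ List.mem_map_of_mem hp

theorem isChain_iff_forall_mem_edgesOfL : l.IsChain R ↔ ∀ p ∈ edgesOfL l, R p.1 p.2 := by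
  induction l with
  | nil => simp
  | cons a l ih => cases l with
    | nil => simp
    | cons b l => simp [List.isChain_cons_cons, ih]

theorem nodup_edgesOfL (hl : l.Nodup) : (edgesOfL l).Nodup :=
  List.Nodup.of_map Prod.fst ((map_fst_edgesOfL l).symm ▸ hl.sublist (List.dropLast_sublist l))

theorem IsPathList.ne_nil (h : IsPathList R u w l) : l ≠ [] := by
  rintro rfl; simp [IsPathList] at h

theorem IsPathList.mono (hR : ∀ a b, R a b → R' a b) (h : IsPathList R u w l) :
    IsPathList R' u w l :=
  ⟨h.1.imp hR, h.2⟩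

theorem IsPathList.reflTransGen (h : IsPathList R u w l) : ReflTransGen R u w := by
  obtain ⟨r, rfl⟩ := List.head?_eq_some_iff.1 h.2.1
  exact List.relationReflTransGen_of_exists_isChain_cons r h.1
    (by simpa [List.getLast?_eq_some_getLast] using h.2.2)

theorem exists_isPathList_of_reflTransGen (h : ReflTransGen R u w) : ∃ l, IsPathList R u w l := by
  obtain ⟨l, hc, hw⟩ := List.exists_isChain_cons_of_relationReflTransGen h
  exact ⟨u :: l, hc, rfl, by rw [List.getLast?_eq_some_getLast (List.cons_ne_nil _ _), hw]⟩

theorem IsPathList.exists_nodup (h : IsPathList R u w l) :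
    ∃ l', IsPathList R u w l' ∧ l'.Nodup ∧ l' ⊆ l := by
  induction l generalizing u with
  | nil => exact absurd rfl h.ne_nil
  | cons a r ih =>
    obtain ⟨hc, hu, hw⟩ := h
    obtain rfl : a = u := by simpa using hu
    cases r with
    | nil => exact ⟨[a], ⟨List.isChain_singleton a, rfl, hw⟩, List.nodup_singleton a, by simp⟩
    | cons b r =>
      obtain ⟨l', ⟨hc', hb', hw'⟩, hnd, hsub⟩ :=
        ih ⟨(List.isChain_cons_cons.1 hc).2, rfl, by simpa using hw⟩
      by_cases ha : a ∈ l'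
      · obtain ⟨p, q, rfl⟩ := List.append_of_mem ha
        refine ⟨a :: q, ⟨hc'.suffix (List.suffix_append _ _), rfl, ?_⟩,
          hnd.sublist (List.sublist_append_right _ _), fun y hy => ?_⟩
        · simpa [List.getLast?_append] using hw'
        · exact List.mem_cons_of_mem _ (hsub (List.mem_append_right _ hy))
      · obtain ⟨c, l', rfl⟩ := List.exists_cons_of_ne_nil (l := l') (by rintro rfl; simp at hb')
        obtain rfl : c = b := by simpa using hb'
        refine ⟨a :: c :: l', ⟨List.isChain_cons_cons.2 ⟨(List.isChain_cons_cons.1 hc).1, hc'⟩,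
          rfl, by simpa using hw'⟩, List.nodup_cons.2 ⟨ha, hnd⟩, List.cons_subset_cons _ hsub⟩

theorem exists_nodup_isPathList_of_reflTransGen (h : ReflTransGen R u w) :
    ∃ l, IsPathList R u w l ∧ l.Nodup := by
  obtain ⟨l, hl⟩ := exists_isPathList_of_reflTransGen h
  obtain ⟨l', hl', hnd, -⟩ := hl.exists_nodup
  exact ⟨l', hl', hnd⟩

theorem IsPathList.eq_cons_internalsL (h : IsPathList R u w l) (huw : u ≠ w) :
    l = u :: (internalsL l ++ [w]) := by
  obtain ⟨r, rfl⟩ := List.head?_eq_some_iff.1 h.2.1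
  obtain ⟨_ | ⟨a, q⟩, hq⟩ := List.getLast?_eq_some_iff.1 h.2.2
  · exact absurd (List.cons_eq_cons.1 hq).1 huw
  · obtain ⟨rfl, rfl⟩ := List.cons_eq_cons.1 hq
    simp [internalsL]

theorem IsPathList.mem_internalsL_iff (h : IsPathList R u w l) (huw : u ≠ w) (hl : l.Nodup) :
    x ∈ internalsL l ↔ x ∈ l ∧ x ≠ u ∧ x ≠ w := by
  rw [h.eq_cons_internalsL huw] at hl
  conv_rhs => rw [h.eq_cons_internalsL huw]
  simp only [List.nodup_cons, List.mem_append, List.mem_singleton, List.nodup_append] at hl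
  grind

theorem IsPathList.eq_pair_of_mem_edgesOfL (h : IsPathList R u w l) (huw : u ≠ w) (hl : l.Nodup)
    (he : (u, w) ∈ edgesOfL l) : l = [u, w] := by
  rw [h.eq_cons_internalsL huw] at hl he ⊢
  cases hmid : internalsL l with
  | nil => rfl
  | cons y m =>
    rw [hmid] at hl he
    simp only [List.cons_append, edgesOfL_cons_cons, List.mem_cons, Prod.mk.injEq, true_and] at he
    rcases he with rfl | he
    · simp at hl
    · have := List.dropLast_subset _ (fst_mem_dropLast_of_mem_edgesOfL he)
      simp_all

theorem IsPathList.isPathList_delV (h : IsPathList R u w l) (hx : x ∉ l) :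
    IsPathList (delV R x) u w l :=
  ⟨h.1.imp_of_mem_imp fun _ _ ha hb hab => ⟨hab, ne_of_mem_of_not_mem ha hx,
    ne_of_mem_of_not_mem hb hx⟩, h.2⟩

theorem IsPathList.isPathList_delE {a b : V} (h : IsPathList R u w l)
    (hab : (a, b) ∉ edgesOfL l) : IsPathList (delE R a b) u w l :=
  ⟨isChain_iff_forall_mem_edgesOfL.2 fun p hp => ⟨isChain_iff_forall_mem_edgesOfL.1 h.1 p hp,
    fun ⟨h₁, h₂⟩ => hab (h₁ ▸ h₂ ▸ hp)⟩, h.2⟩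

theorem IsPathList.not_mem_of_delV (h : IsPathList (delV R x) u w l) (hxu : x ≠ u) : x ∉ l := by
  obtain ⟨r, rfl⟩ := List.head?_eq_some_iff.1 h.2.1
  intro hx
  exact (h.1.induction (· ≠ x) _ (fun _ _ hab _ => hab.2.2) (fun _ => hxu.symm)) x hx rfl

theorem IsPathList.exists_crossing {S : V → Prop} (h : IsPathList R u w l) (hu : S u)
    (hw : ¬S w) : ∃ p ∈ edgesOfL l, S p.1 ∧ ¬S p.2 := by
  by_contra! hno
  obtain ⟨r, rfl⟩ := List.head?_eq_some_iff.1 h.2.1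
  have hc : (u :: r).IsChain (fun a b => S a → S b) :=
    isChain_iff_forall_mem_edgesOfL.2 fun p hp => hno p hp
  exact hw (hc.induction S _ (fun _ _ hab => hab) (fun _ => hu) w (List.mem_of_getLast? h.2.2))

theorem eq_of_crossing_of_isChain {S : V → Prop} (hl : l.IsChain fun a b => S b → S a)
    {p q : V × V} (hp : p ∈ edgesOfL l) (hq : q ∈ edgesOfL l) (hp' : S p.1 ∧ ¬S p.2)
    (hq' : S q.1 ∧ ¬S q.2) : p = q := by
  induction l with
  | nil => simp at hp
  | cons a l ih => cases l with
    | nil => simp at hp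
    | cons b l =>
      obtain ⟨-, hl⟩ := List.isChain_cons_cons.1 hl
      have hout : ∀ r ∈ edgesOfL (b :: l), ¬S b → ¬S r.1 := fun r hr hb =>
        hl.induction (¬S ·) _ (fun _ _ h hx hy => hx (h hy)) (fun _ => hb) _
          (List.dropLast_subset _ (fst_mem_dropLast_of_mem_edgesOfL hr))
      simp only [edgesOfL_cons_cons, List.mem_cons] at hp hq
      rcases hp with rfl | hp <;> rcases hq with rfl | hq
      · rfl
      · exact absurd hq'.1 (hout q hq hp'.2)
      · exact absurd hp'.1 (hout p hp hq'.2)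
      · exact ih hl hp hq

end Paths

section TwoVPaths

variable {E : V → V → Prop} {v w : V}

theorem TwoVPaths.twoEPaths (h : TwoVPaths E v w) (hvw : v ≠ w) : TwoEPaths E v w := by
  obtain ⟨l₁, l₂, hl₁, hl₂, hnd₁, hnd₂, hne, hint⟩ := h
  refine ⟨l₁, l₂, hl₁, hl₂, fun e he₁ he₂ => hne ?_⟩
  have hends : ∀ {l}, IsPathList E v w l → e ∈ edgesOfL l →
      (e.1 = v ∨ e.1 ∈ internalsL l) ∧ (e.2 ∈ internalsL l ∨ e.2 = w) := fun hl he => by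
    have h₁ := fst_mem_dropLast_of_mem_edgesOfL he
    have h₂ := snd_mem_tail_of_mem_edgesOfL he
    rw [hl.eq_cons_internalsL hvw, ← List.cons_append, List.dropLast_concat] at h₁
    rw [hl.eq_cons_internalsL hvw, List.tail_cons] at h₂
    simpa [or_comm] using And.intro h₁ h₂
  have hv : e.1 = v := by_contra fun h =>
    hint _ ((hends hl₁ he₁).1.resolve_left h) ((hends hl₂ he₂).1.resolve_left h)
  have hw : e.2 = w := by_contra fun h =>
    hint _ ((hends hl₁ he₁).2.resolve_right h) ((hends hl₂ he₂).2.resolve_right h)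
  obtain rfl : e = (v, w) := Prod.ext hv hw
  rw [hl₁.eq_pair_of_mem_edgesOfL hvw hnd₁ he₁, hl₂.eq_pair_of_mem_edgesOfL hvw hnd₂ he₂]

theorem TwoVPaths.reflTransGen_delV (h : TwoVPaths E v w) (hvw : v ≠ w) {x : V} (hxv : x ≠ v)
    (hxw : x ≠ w) : ReflTransGen (delV E x) v w := by
  obtain ⟨l₁, l₂, hl₁, hl₂, hnd₁, hnd₂, -, hint⟩ := h
  obtain ⟨l, hl, hnd, hx⟩ : ∃ l, IsPathList E v w l ∧ l.Nodup ∧ x ∉ internalsL l := by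
    by_cases hx : x ∈ internalsL l₁
    · exact ⟨l₂, hl₂, hnd₂, hint x hx⟩
    · exact ⟨l₁, hl₁, hnd₁, hx⟩
  exact (hl.isPathList_delV fun hxl =>
    hx ((hl.mem_internalsL_iff hvw hnd).2 ⟨hxl, hxv, hxw⟩)).reflTransGen

end TwoVPaths

section Flow

variable [DecidableEq V] {R : V → V → Prop} {l : List V} {u w s t : V}

def netOutflow (M : Multiset (V × V)) (y : V) : ℤ :=
  (M.map Prod.fst).count y - (M.map Prod.snd).count y

theorem netOutflow_add (M N : Multiset (V × V)) :
    netOutflow (M + N) = netOutflow M + netOutflow N := by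
  ext y; simp only [netOutflow, Multiset.map_add, Multiset.count_add, Pi.add_apply]; push_cast; ring

theorem netOutflow_sub {M N : Multiset (V × V)} (h : N ≤ M) :
    netOutflow (M - N) = netOutflow M - netOutflow N := by
  rw [eq_sub_iff_add_eq, ← netOutflow_add, tsub_add_cancel_of_le h]

theorem netOutflow_map_swap (M : Multiset (V × V)) :
    netOutflow (M.map Prod.swap) = -netOutflow M := by
  ext y; simp [netOutflow, Multiset.map_map]

theorem netOutflow_cons (e : V × V) (M : Multiset (V × V)) :
    netOutflow (e ::ₘ M) = netOutflow M + Pi.single e.1 1 - Pi.single e.2 1 := by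
  ext y; simp only [netOutflow, Multiset.map_cons, Multiset.count_cons, Pi.add_apply,
    Pi.sub_apply, Pi.single_apply]; split_ifs <;> push_cast <;> ring

theorem IsPathList.netOutflow_edgesOfL (h : IsPathList R u w l) :
    netOutflow (edgesOfL l) = Pi.single u 1 - Pi.single w 1 := by
  obtain ⟨r, rfl⟩ := List.head?_eq_some_iff.1 h.2.1
  obtain ⟨q, hq⟩ := List.getLast?_eq_some_iff.1 h.2.2
  have hdrop : (u :: r).dropLast = q := by rw [hq, List.dropLast_concat]
  ext y
  have hcount := congrArg (List.count y) hq
  simp only [List.count_cons, List.count_append] at hcount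
  simp only [netOutflow, Multiset.map_coe, map_fst_edgesOfL, map_snd_edgesOfL, hdrop,
    Multiset.coe_count, List.tail_cons, Pi.sub_apply, Pi.single_apply]
  split_ifs at hcount ⊢ <;> simp_all; omega

theorem netOutflow_add_filter_swap_not_mem {A B : Multiset (V × V)} (hA : A.Nodup)
    (hB : B.Nodup) :
    netOutflow (A.filter (·.swap ∉ B) + B.filter (·.swap ∉ A)) = netOutflow A + netOutflow B := by
  have hcancel : A.filter (·.swap ∈ B) = (B.filter (·.swap ∈ A)).map Prod.swap := by
    rw [Multiset.Nodup.ext (hA.filter _) ((hB.filter _).map Prod.swap_injective)]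
    intro e
    simp only [Multiset.mem_filter, Multiset.mem_map]
    exact ⟨fun h => ⟨e.swap, ⟨h.2, h.1⟩, e.swap_swap⟩,
      by rintro ⟨f, ⟨hf, hfA⟩, rfl⟩; exact ⟨hfA, hf⟩⟩
  have hA' := congrArg netOutflow (Multiset.filter_add_not (·.swap ∈ B) A)
  have hB' := congrArg netOutflow (Multiset.filter_add_not (·.swap ∈ A) B)
  rw [netOutflow_add] at hA' hB'
  rw [← hA', ← hB', netOutflow_add, hcancel, netOutflow_map_swap]
  abel

theorem exists_walk_of_netOutflow_pos (M : Multiset (V × V)) {x : V} (hxt : x ≠ t)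
    (hx : 0 < netOutflow M x) (hM : ∀ y, y ≠ x → y ≠ t → 0 ≤ netOutflow M y) :
    ∃ l, l.head? = some x ∧ l.getLast? = some t ∧ (edgesOfL l : Multiset (V × V)) ≤ M := by
  induction M using Multiset.strongInductionOn generalizing x with
  | ih M ih =>
  obtain ⟨z, he⟩ : ∃ z, (x, z) ∈ M := by
    have : x ∈ M.map Prod.fst := by rw [← Multiset.count_pos]; unfold netOutflow at hx; omega
    obtain ⟨⟨x', z⟩, he, rfl⟩ := Multiset.mem_map.1 this
    exact ⟨z, he⟩
  by_cases hzt : z = t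
  · subst hzt
    exact ⟨[x, z], rfl, rfl, by simpa [edgesOfL] using he⟩
  have hflow : ∀ y, netOutflow (M.erase (x, z)) y =
      netOutflow M y - (if y = x then 1 else 0) + (if y = z then 1 else 0) := fun y => by
    conv_rhs => rw [← Multiset.cons_erase he, netOutflow_cons]
    simp only [Pi.add_apply, Pi.sub_apply, Pi.single_apply]; ring
  obtain ⟨l, hz, ht, hle⟩ := ih _ (Multiset.erase_lt.2 he) hzt
    (by
      rw [hflow, if_pos rfl]
      by_cases hzx : z = x
      · subst hzx; rw [if_pos rfl]; omega
      · rw [if_neg hzx]; have := hM z hzx hzt; omega)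
    (fun y hyz hyt => by
      rw [hflow, if_neg hyz]
      by_cases hyx : y = x
      · rw [if_pos hyx, hyx]; omega
      · rw [if_neg hyx]; have := hM y hyx hyt; omega)
  obtain ⟨r, rfl⟩ := List.head?_eq_some_iff.1 hz
  refine ⟨x :: z :: r, rfl, by simpa using ht, ?_⟩
  rw [edgesOfL_cons_cons, ← Multiset.cons_coe, ← Multiset.cons_erase he]
  exact Multiset.cons_le_cons _ hle

theorem twoEPaths_of_netOutflow {M : Multiset (V × V)} (hnd : M.Nodup)
    (hR : ∀ e ∈ M, R e.1 e.2) (hst : s ≠ t)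
    (hM : netOutflow M = 2 • (Pi.single s 1 - Pi.single t 1)) : TwoEPaths R s t := by
  have hpath : ∀ {l}, l.head? = some s → l.getLast? = some t →
      (edgesOfL l : Multiset (V × V)) ≤ M → IsPathList R s t l := fun hs ht hle =>
    ⟨isChain_iff_forall_mem_edgesOfL.2 fun p hp => hR p (Multiset.mem_of_le hle
      (Multiset.mem_coe.2 hp)), hs, ht⟩
  obtain ⟨l₁, hs₁, ht₁, hle₁⟩ := exists_walk_of_netOutflow_pos M hst
    (by simp [hM, hst]) (fun y hys hyt => by simp [hM, hys, hyt])
  have h₁ := hpath hs₁ ht₁ hle₁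
  set M₁ := M - (edgesOfL l₁ : Multiset (V × V))
  have hM₁ : netOutflow M₁ = Pi.single s 1 - Pi.single t 1 := by
    rw [netOutflow_sub hle₁, hM, h₁.netOutflow_edgesOfL, two_nsmul, add_sub_cancel_right]
  obtain ⟨l₂, hs₂, ht₂, hle₂⟩ := exists_walk_of_netOutflow_pos M₁ hst
    (by simp [hM₁, hst]) (fun y hys hyt => by simp [hM₁, hys, hyt])
  have hle : (edgesOfL l₁ + edgesOfL l₂ : Multiset (V × V)) ≤ M := (le_tsub_iff_left hle₁).1 hle₂
  have hdisj := (Multiset.nodup_add.1 (Multiset.nodup_of_le hle hnd)).2.2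
  refine ⟨l₁, l₂, h₁, hpath hs₂ ht₂ (hle₂.trans tsub_le_self), fun e he₁ he₂ => ?_⟩
  exact Multiset.disjoint_left.1 hdisj (Multiset.mem_coe.2 he₁) (Multiset.mem_coe.2 he₂)

end Flow

section Residual

variable {R : V → V → Prop} {P : List V} {s t : V}

def residualRel (R : V → V → Prop) (P : List V) (a b : V) : Prop :=
  (R a b ∧ (a, b) ∉ edgesOfL P) ∨ (b, a) ∈ edgesOfL P

theorem exists_forall_mem_edgesOfL_of_not_reflTransGen_residualRel (hP : IsPathList R s t P)
    (h : ¬ReflTransGen (residualRel R P) s t) :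
    ∃ e ∈ edgesOfL P, ∀ L, IsPathList R s t L → e ∈ edgesOfL L := by
  set S := ReflTransGen (residualRel R P) s
  have hback : P.IsChain fun a b => S b → S a :=
    isChain_iff_forall_mem_edgesOfL.2 fun p hp hS => hS.tail (Or.inr hp)
  obtain ⟨e, he, hcross⟩ := hP.exists_crossing (S := S) ReflTransGen.refl h
  refine ⟨e, he, fun L hL => ?_⟩
  obtain ⟨q, hq, hq₁, hq₂⟩ := hL.exists_crossing (S := S) ReflTransGen.refl h
  have hqP : q ∈ edgesOfL P := by
    by_contra hqP
    exact hq₂ (hq₁.tail (Or.inl ⟨isChain_iff_forall_mem_edgesOfL.1 hL.1 q hq, hqP⟩))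
  rwa [eq_of_crossing_of_isChain hback he hqP hcross ⟨hq₁, hq₂⟩]

theorem twoEPaths_of_reflTransGen_residualRel [DecidableEq V] (hP : IsPathList R s t P)
    (hPnd : P.Nodup) (hst : s ≠ t) (h : ReflTransGen (residualRel R P) s t) :
    TwoEPaths R s t := by
  obtain ⟨Q, hQ, hQnd⟩ := exists_nodup_isPathList_of_reflTransGen h
  set EP : Multiset (V × V) := ↑(edgesOfL P)
  set EQ : Multiset (V × V) := ↑(edgesOfL Q)
  have hforward : ∀ e ∈ EQ.filter (·.swap ∉ EP), R e.1 e.2 ∧ e ∉ EP := fun e he => by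
    obtain ⟨he, hrev⟩ := Multiset.mem_filter.1 he
    rcases isChain_iff_forall_mem_edgesOfL.1 hQ.1 e he with hfw | hbw
    · exact hfw
    · exact absurd hbw hrev
  have hEP : EP.Nodup := nodup_edgesOfL hPnd
  have hEQ : EQ.Nodup := nodup_edgesOfL hQnd
  refine twoEPaths_of_netOutflow (M := EP.filter (·.swap ∉ EQ) + EQ.filter (·.swap ∉ EP))
    (Multiset.nodup_add.2 ⟨hEP.filter _, hEQ.filter _, Multiset.disjoint_left.2 fun he₁ he₂ =>
      (hforward _ he₂).2 (Multiset.mem_of_mem_filter he₁)⟩) (fun e he => ?_) hst ?_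
  · rcases Multiset.mem_add.1 he with he | he
    · exact isChain_iff_forall_mem_edgesOfL.1 hP.1 e (Multiset.mem_of_mem_filter he)
    · exact (hforward e he).1
  · rw [netOutflow_add_filter_swap_not_mem hEP hEQ, hP.netOutflow_edgesOfL,
      hQ.netOutflow_edgesOfL, two_nsmul]

end Residual

section Split

variable {E : V → V → Prop} {l : List V} {u w : V}

/-- `(x, false)` and `(x, true)` are the entry and exit copies of the vertex `x`. -/
def splitRel (E : V → V → Prop) (p q : V × Bool) : Prop :=
  (p.2 = false ∧ q = (p.1, true)) ∨ (p.2 = true ∧ q.2 = false ∧ E p.1 q.1)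

def splitList (l : List V) : List (V × Bool) :=
  l.flatMap fun x => [(x, false), (x, true)]

@[simp] theorem splitList_nil : splitList ([] : List V) = [] := rfl

@[simp] theorem splitList_cons (x : V) (l : List V) :
    splitList (x :: l) = (x, false) :: (x, true) :: splitList l := rfl

@[simp] theorem splitList_append (l₁ l₂ : List V) :
    splitList (l₁ ++ l₂) = splitList l₁ ++ splitList l₂ :=
  List.flatMap_append

theorem mem_splitList {p : V × Bool} : p ∈ splitList l ↔ p.1 ∈ l := by
  obtain ⟨x, b⟩ := p
  cases b <;> simp [splitList]

theorem isChain_splitList (h : l.IsChain E) : (splitList l).IsChain (splitRel E) := by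
  induction l with
  | nil => simp
  | cons a l ih =>
    have hstep : splitRel E (a, false) (a, true) := Or.inl ⟨rfl, rfl⟩
    cases l with
    | nil => simpa using hstep
    | cons b l =>
      obtain ⟨hab, hl⟩ := List.isChain_cons_cons.1 h
      simpa [List.isChain_cons_cons, hstep, splitRel, hab] using ih hl

theorem nodup_splitList (hl : l.Nodup) : (splitList l).Nodup := by
  induction l with
  | nil => simp
  | cons a l ih =>
    obtain ⟨ha, hl⟩ := List.nodup_cons.1 hl
    simp_all [mem_splitList]

def splitPath (l : List V) : List (V × Bool) :=
  (splitList l).tail.dropLast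

theorem fst_mem_of_mem_splitPath {p : V × Bool} (hp : p ∈ splitPath l) : p.1 ∈ l :=
  mem_splitList.1 (List.tail_subset _ (List.dropLast_subset _ hp))

theorem nodup_splitPath (hl : l.Nodup) : (splitPath l).Nodup :=
  (nodup_splitList hl).sublist ((List.dropLast_sublist _).trans (List.tail_sublist _))

theorem IsPathList.splitPath_eq (h : IsPathList E u w l) (huw : u ≠ w) :
    splitPath l = (u, true) :: splitList (internalsL l) ++ [(w, false)] := by
  conv_lhs => rw [splitPath, h.eq_cons_internalsL huw]
  rw [← List.dropLast_concat (l₁ := (u, true) :: splitList (internalsL l) ++ [(w, false)])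
    (b := (w, true))]
  simp

theorem IsPathList.isPathList_splitPath (h : IsPathList E u w l) (huw : u ≠ w) :
    IsPathList (splitRel E) (u, true) (w, false) (splitPath l) := by
  refine ⟨(isChain_splitList h.1).tail.dropLast, ?_, ?_⟩ <;> rw [h.splitPath_eq huw]
  · rfl
  · exact List.getLast?_concat

theorem exists_isPathList_of_isPathList_splitRel :
    ∀ {x : V} {L : List (V × Bool)}, IsPathList (splitRel E) (x, true) (w, false) L →
      ∃ m, IsPathList E x w m ∧ ∀ z ∈ m, z = x ∨ z = w ∨ ((z, false), (z, true)) ∈ edgesOfL L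
  | _, [], h => absurd rfl h.ne_nil
  | _, [_], ⟨_, hx, hw⟩ => by simp_all
  | x, [a, b], ⟨hc, hx, hw⟩ => by
    obtain ⟨rfl, rfl⟩ : a = (x, true) ∧ b = (w, false) := by simp_all
    refine ⟨[x, w], ⟨?_, rfl, rfl⟩, by simp⟩
    exact List.isChain_pair.2 (by simpa [splitRel] using List.isChain_pair.1 hc)
  | x, a :: b :: c :: L, ⟨hc, hx, hw⟩ => by
    obtain rfl : a = (x, true) := by simpa using hx
    obtain ⟨hab, hbL⟩ := List.isChain_cons_cons.1 hc
    obtain ⟨hbc, hcL⟩ := List.isChain_cons_cons.1 hbL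
    obtain ⟨y, b'⟩ := b
    obtain ⟨rfl, hxy⟩ : b' = false ∧ E x y := by simpa [splitRel] using hab
    have hcy : c = (y, true) := by simpa [splitRel] using hbc
    obtain ⟨m, hm, hmem⟩ := exists_isPathList_of_isPathList_splitRel (x := y) (L := c :: L)
      ⟨hcL, by rw [hcy]; rfl, by simpa using hw⟩
    obtain ⟨m, rfl⟩ := List.head?_eq_some_iff.1 hm.2.1
    refine ⟨x :: y :: m, ⟨List.isChain_cons_cons.2 ⟨hxy, hm.1⟩, rfl, ?_⟩, ?_⟩
    · rw [List.getLast?_cons_cons]; exact hm.2.2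
    rintro z (_ | ⟨_, hz⟩)
    · exact Or.inl rfl
    rcases hmem z hz with rfl | rfl | hz
    · simp [hcy]
    · simp
    · simp [hz]

end Split

section Menger

variable {E : V → V → Prop} {v w : V}

theorem twoVPaths_of_twoEPaths_splitRel (hvw : v ≠ w) (hnE : ¬E v w)
    (h : TwoEPaths (splitRel E) (v, true) (w, false)) : TwoVPaths E v w := by
  obtain ⟨L₁, L₂, hL₁, hL₂, hdisj⟩ := h
  obtain ⟨m₁, hm₁, hmem₁⟩ := exists_isPathList_of_isPathList_splitRel hL₁
  obtain ⟨m₂, hm₂, hmem₂⟩ := exists_isPathList_of_isPathList_splitRel hL₂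
  obtain ⟨l₁, hl₁, hnd₁, hsub₁⟩ := hm₁.exists_nodup
  obtain ⟨l₂, hl₂, hnd₂, hsub₂⟩ := hm₂.exists_nodup
  have hint : ∀ x ∈ internalsL l₁, x ∉ internalsL l₂ := by
    intro x hx₁ hx₂
    obtain ⟨hx₁, hxv, hxw⟩ := (hl₁.mem_internalsL_iff hvw hnd₁).1 hx₁
    obtain ⟨hx₂, -, -⟩ := (hl₂.mem_internalsL_iff hvw hnd₂).1 hx₂
    obtain ⟨e₁, e₂⟩ := And.intro (hmem₁ x (hsub₁ hx₁)) (hmem₂ x (hsub₂ hx₂))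
    simp only [hxv, hxw, false_or] at e₁ e₂
    exact hdisj _ e₁ e₂
  refine ⟨l₁, l₂, hl₁, hl₂, hnd₁, hnd₂, ?_, hint⟩
  rintro rfl
  have hnil : internalsL l₁ = [] := List.eq_nil_iff_forall_not_mem.2 fun x hx => hint x hx hx
  have hpair := hl₁.eq_cons_internalsL hvw
  rw [hnil] at hpair
  exact hnE (List.isChain_pair.1 (hpair ▸ hl₁.1))

theorem exists_isPathList_splitRel_not_mem_edgesOfL (hvw : v ≠ w) (hnE : ¬E v w)
    (hres : ∀ x, x ≠ v → x ≠ w → ReflTransGen (delV E x) v w) {P : List V}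
    (hP : IsPathList E v w P) (hPnd : P.Nodup) {e : (V × Bool) × (V × Bool)}
    (he : e ∈ edgesOfL (splitPath P)) :
    ∃ L, IsPathList (splitRel E) (v, true) (w, false) L ∧ e ∉ edgesOfL L := by
  have hsplit : splitRel E e.1 e.2 :=
    isChain_iff_forall_mem_edgesOfL.1 (hP.isPathList_splitPath hvw).1 e he
  rw [hP.splitPath_eq hvw] at he
  have h₁ := fst_mem_dropLast_of_mem_edgesOfL he
  have h₂ := snd_mem_tail_of_mem_edgesOfL he
  rw [List.dropLast_concat] at h₁
  obtain ⟨x, hx, hxe⟩ : ∃ x ∈ internalsL P, x = e.1.1 ∨ x = e.2.1 := by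
    simp only [List.mem_cons, List.cons_append, List.tail_cons, List.mem_append, mem_splitList,
      List.not_mem_nil, or_false] at h₁ h₂
    rcases h₁ with h₁ | h₁
    · rcases h₂ with h₂ | h₂
      · exact ⟨_, h₂, Or.inr rfl⟩
      · rw [h₁, h₂] at hsplit
        exact absurd (by simpa [splitRel] using hsplit) hnE
    · exact ⟨_, h₁, Or.inl rfl⟩
  obtain ⟨-, hxv, hxw⟩ := (hP.mem_internalsL_iff hvw hPnd).1 hx
  obtain ⟨m, hm⟩ := exists_isPathList_of_reflTransGen (hres x hxv hxw)
  refine ⟨splitPath m, (hm.mono fun _ _ h => h.1).isPathList_splitPath hvw, fun he' => ?_⟩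
  apply hm.not_mem_of_delV hxv
  rcases hxe with rfl | rfl
  · exact fst_mem_of_mem_splitPath (List.of_mem_zip he').1
  · exact fst_mem_of_mem_splitPath (List.tail_subset _ (List.of_mem_zip he').2)

theorem twoVPaths_of_forall_reflTransGen_delV (hvw : v ≠ w) (hnE : ¬E v w)
    (hreach : ReflTransGen E v w) (hres : ∀ x, x ≠ v → x ≠ w → ReflTransGen (delV E x) v w) :
    TwoVPaths E v w := by
  classical
  obtain ⟨P, hP, hPnd⟩ := exists_nodup_isPathList_of_reflTransGen hreach
  have hsplit := hP.isPathList_splitPath hvw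
  by_cases h : ReflTransGen (residualRel (splitRel E) (splitPath P)) (v, true) (w, false)
  · exact twoVPaths_of_twoEPaths_splitRel hvw hnE
      (twoEPaths_of_reflTransGen_residualRel hsplit (nodup_splitPath hPnd) (by simp) h)
  · obtain ⟨e, he, hcut⟩ := exists_forall_mem_edgesOfL_of_not_reflTransGen_residualRel hsplit h
    obtain ⟨L, hL, heL⟩ := exists_isPathList_splitRel_not_mem_edgesOfL hvw hnE hres hP hPnd he
    exact (heL (hcut L hL)).elim

theorem TwoEPaths.twoVPaths (h : TwoEPaths E v w) (hvw : v ≠ w)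
    (hres : ∀ x, x ≠ v → x ≠ w → ReflTransGen (delV E x) v w) : TwoVPaths E v w := by
  obtain ⟨l₁, l₂, hl₁, hl₂, hdisj⟩ := h
  by_cases hE : E v w
  · obtain ⟨l, hl, hvwl⟩ : ∃ l, IsPathList E v w l ∧ (v, w) ∉ edgesOfL l := by
      by_cases h₁ : (v, w) ∈ edgesOfL l₁
      · exact ⟨l₂, hl₂, hdisj _ h₁⟩
      · exact ⟨l₁, hl₁, h₁⟩
    obtain ⟨l', hl', hnd, -⟩ := (hl.isPathList_delE hvwl).exists_nodup
    refine ⟨[v, w], l', ⟨List.isChain_pair.2 hE, rfl, rfl⟩, hl'.mono fun _ _ h => h.1,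
      by simpa using hvw, hnd, ?_, by simp [internalsL]⟩
    rintro rfl
    exact (List.isChain_pair.1 hl'.1).2 ⟨rfl, rfl⟩
  · exact twoVPaths_of_forall_reflTransGen_delV hvw hE hl₁.reflTransGen hres

end Menger

theorem stmt8 (E : V → V → Prop) (v w : V) :
    TwoVConn E v w ↔ VRes E v w ∧ TwoEConn E v w := by
  constructor
  · rintro ⟨hvw, hvw₂, hwv₂⟩
    refine ⟨⟨hvw, fun x hxv hxw => ?_⟩, hvw, hvw₂.twoEPaths hvw, hwv₂.twoEPaths hvw.symm⟩
    exact ⟨hvw₂.reflTransGen_delV hvw hxv hxw, hwv₂.reflTransGen_delV hvw.symm hxw hxv⟩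
  · rintro ⟨⟨hvw, hres⟩, -, hvw₂, hwv₂⟩
    exact ⟨hvw, hvw₂.twoVPaths hvw fun x hxv hxw => (hres x hxv hxw).1,
      hwv₂.twoVPaths hvw.symm fun x hxw hxv => (hres x hxv hxw).2⟩
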